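/- arXiv:2510.02041 — 2 statements merged into one kernel-verified Lean document; each statement's English description precedes it below -/
import Mathlib

section
/- For every positive integer M, ∑_{m=1}^{M-1} (1 − m/M) · m^{1/2} ≤ (4/15) M^{3/2}. -/
/-!
The summand is `g m` for the concave function `g x = (1 - x / M) √x`, which vanishes at `0` and
at `M`. Hence the sum is the trapezoidal rule with unit steps for `∫₀ᴹ g`, and the trapezoidal
rule underestimates the integral of a concave function. Finally `∫₀ᴹ g = (4/15) M^{3/2}`.
-/

open MeasureTheory intervalIntegral Set Finset

theorem ConcaveOn.add_le_add_reflect {f : ℝ → ℝ} {a b x : ℝ} (hf : ConcaveOn ℝ (Icc a b) f)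
    (hx : x ∈ Icc a b) : f a + f b ≤ f x + f (a + b - x) := by
  have hab : a ≤ b := hx.1.trans hx.2
  rcases hab.eq_or_lt with rfl | hab
  · obtain rfl : x = a := le_antisymm hx.2 hx.1
    simp
  have hba : b - a ≠ 0 := (sub_pos.2 hab).ne'
  have hs : 0 ≤ (x - a) / (b - a) := div_nonneg (sub_nonneg.2 hx.1) (sub_pos.2 hab).le
  have ht : 0 ≤ (b - x) / (b - a) := div_nonneg (sub_nonneg.2 hx.2) (sub_pos.2 hab).le
  have hst : (b - x) / (b - a) + (x - a) / (b - a) = 1 := by field_simp; ring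
  have hx_le := hf.2 (left_mem_Icc.2 hab.le) (right_mem_Icc.2 hab.le) ht hs hst
  have hreflect_le :=
    hf.2 (left_mem_Icc.2 hab.le) (right_mem_Icc.2 hab.le) hs ht (by rw [add_comm, hst])
  have hx_eq : ((b - x) / (b - a)) • a + ((x - a) / (b - a)) • b = x := by
    simp only [smul_eq_mul]; field_simp; ring
  have hreflect_eq : ((x - a) / (b - a)) • a + ((b - x) / (b - a)) • b = a + b - x := by
    simp only [smul_eq_mul]; field_simp; ring
  rw [hx_eq] at hx_le
  rw [hreflect_eq] at hreflect_le
  simp only [smul_eq_mul] at hx_le hreflect_le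
  linear_combination hx_le + hreflect_le - (f a + f b) * hst

-- `∫ f` is also the integral of the reflection `x ↦ f (a + b - x)`; average the two.
theorem ConcaveOn.trapezoidal_integral_one_le_integral {f : ℝ → ℝ} {a b : ℝ} (hab : a ≤ b)
    (hf : ConcaveOn ℝ (Icc a b) f) (hint : IntervalIntegrable f volume a b) :
    trapezoidal_integral f 1 a b ≤ ∫ x in a..b, f x := by
  have hreflect : ∫ x in a..b, f (a + b - x) = ∫ x in a..b, f x := by
    simp [intervalIntegral.integral_comp_sub_left]
  have hint_reflect : IntervalIntegrable (fun x => f (a + b - x)) volume a b := by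
    simpa using (hint.comp_sub_left (a + b)).symm
  have hsum := integral_mono_on hab intervalIntegrable_const (hint.add hint_reflect)
    fun x hx => hf.add_le_add_reflect hx
  rw [intervalIntegral.integral_const, intervalIntegral.integral_add hint hint_reflect, hreflect,
    smul_eq_mul] at hsum
  rw [trapezoidal_integral_one]
  linarith

theorem ConcaveOn.trapezoidal_integral_le_integral {f : ℝ → ℝ} {N : ℕ} {a b : ℝ} (hN : 0 < N)
    (hab : a ≤ b) (hf : ConcaveOn ℝ (Icc a b) f) (hint : IntervalIntegrable f volume a b) :
    trapezoidal_integral f N a b ≤ ∫ x in a..b, f x := by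
  set h := (b - a) / N
  have hb : b = a + N * h := by simp only [h]; field_simp; ring
  have hh : 0 ≤ h := div_nonneg (sub_nonneg.2 hab) N.cast_nonneg
  rw [← sub_nonpos, ← trapezoidal_error, hb,
    ← sum_trapezoidal_error_adjacent_intervals hN (hb ▸ hint)]
  refine sum_nonpos fun i hi => sub_nonpos.2 ?_
  have hi : (i : ℝ) + 1 ≤ N := by exact_mod_cast mem_range.1 hi
  have hsub : Icc (a + i * h) (a + (i + 1) * h) ⊆ Icc a b :=
    Icc_subset_Icc (by nlinarith [i.cast_nonneg (α := ℝ)]) (by nlinarith)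
  refine (hf.subset hsub (convex_Icc _ _)).trapezoidal_integral_one_le_integral (by nlinarith) ?_
  exact hint.mono_set (by rw [Set.uIcc_of_le (by nlinarith), Set.uIcc_of_le hab]; exact hsub)

theorem trapezoidal_integral_zero_natCast (f : ℝ → ℝ) {N : ℕ} (hN : 0 < N) :
    trapezoidal_integral f N 0 N = (f 0 + f N) / 2 + ∑ m ∈ Ico 1 N, f m := by
  have hN' : (N : ℝ) ≠ 0 := by positivity
  rw [trapezoidal_integral, sum_Ico_eq_sum_range]
  simp [hN', add_comm]

theorem Real.rpow_three_halves {x : ℝ} (hx : 0 ≤ x) : x ^ (3 / 2 : ℝ) = x * √x := by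
  rw [show (3 / 2 : ℝ) = 1 + 1 / 2 by norm_num, Real.rpow_one_add' hx (by norm_num),
    Real.sqrt_eq_rpow]

theorem concaveOn_one_sub_div_mul_sqrt {c : ℝ} (hc : 0 ≤ c) :
    ConcaveOn ℝ (Ici 0) fun x : ℝ => (1 - x / c) * √x := by
  have hconvex : ConvexOn ℝ (Ici 0) fun x : ℝ => c⁻¹ • x ^ (3 / 2 : ℝ) :=
    (convexOn_rpow (by norm_num)).smul (inv_nonneg.2 hc)
  refine (Real.strictConcaveOn_sqrt.concaveOn.sub hconvex).congr fun x hx => ?_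
  simp only [Pi.sub_apply, smul_eq_mul, Real.rpow_three_halves (mem_Ici.1 hx)]
  ring

theorem integral_one_sub_div_mul_sqrt {c : ℝ} (hc : 0 < c) :
    ∫ x in 0..c, (1 - x / c) * √x = 4 / 15 * c ^ (3 / 2 : ℝ) := by
  have hintegrand : EqOn (fun x : ℝ => (1 - x / c) * √x)
      (fun x => x ^ (1 / 2 : ℝ) - x ^ (3 / 2 : ℝ) / c) (uIcc 0 c) := fun x hx => by
    rw [uIcc_of_le hc.le] at hx
    simp only [Real.rpow_three_halves hx.1, ← Real.sqrt_eq_rpow]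
    ring
  rw [integral_congr hintegrand, integral_sub (intervalIntegrable_rpow' (by norm_num))
      ((intervalIntegrable_rpow' (by norm_num)).div_const _), intervalIntegral.integral_div,
    integral_rpow (by norm_num), integral_rpow (by norm_num),
    show (1 / 2 + 1 : ℝ) = 3 / 2 by norm_num, Real.rpow_add hc, Real.rpow_one]
  norm_num
  field_simp
  ring

theorem stmt_6 (M : ℕ) (hM : 0 < M) :
    ∑ m ∈ Finset.Ico 1 M, (1 - (m : ℝ) / M) * Real.sqrt m ≤ (4 / 15) * (M : ℝ) ^ ((3 : ℝ) / 2) := by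
  have hM' : (0 : ℝ) < M := Nat.cast_pos.2 hM
  set g : ℝ → ℝ := fun x => (1 - x / M) * √x
  have hconcave : ConcaveOn ℝ (Icc 0 (M : ℝ)) g :=
    (concaveOn_one_sub_div_mul_sqrt hM'.le).subset Icc_subset_Ici_self (convex_Icc _ _)
  calc ∑ m ∈ Ico 1 M, g m = trapezoidal_integral g M 0 M := by
        simp [trapezoidal_integral_zero_natCast g hM, g, hM'.ne']
    _ ≤ ∫ x in 0..(M : ℝ), g x := hconcave.trapezoidal_integral_le_integral hM hM'.le
        (Continuous.intervalIntegrable (by fun_prop) _ _)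
    _ = 4 / 15 * (M : ℝ) ^ (3 / 2 : ℝ) := integral_one_sub_div_mul_sqrt hM'
end

section
/- For t ≥ e², | ∫_t^{t²} (log x)/x^{1/2+it} dx | ≤ 2 log t + 0.921. -/
/-!
For `s ≠ 1`, `x ^ (1 - s) log x / (1 - s) - x ^ (1 - s) / (1 - s) ^ 2` is a primitive of
`log x / x ^ s` (integration by parts). For `s = 1/2 + it` we have `‖x ^ (1 - s)‖ = √x` and
`‖1 - s‖ ≥ t`, so the primitive is at most `2 log t + 1/t` at `t²` and `log t / √t + t^(-3/2)`
at `t`. With `r = √t ≥ e`, the three small terms are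
`1/r² + 2 log r / r + 1/r³ ≤ 1/e² + 2/e + 1/e³ < 0.921`, because `log r / r` is decreasing
beyond `e`.
-/

open Complex

noncomputable def logCpowPrimitive (s : ℂ) (x : ℝ) : ℂ :=
  (x : ℂ) ^ (1 - s) * Real.log x / (1 - s) - (x : ℂ) ^ (1 - s) / (1 - s) ^ 2

theorem hasDerivAt_logCpowPrimitive {s : ℂ} (hs : s ≠ 1) {x : ℝ} (hx : 0 < x) :
    HasDerivAt (logCpowPrimitive s) (Real.log x / (x : ℂ) ^ s) x := by
  have hs' : 1 - s ≠ 0 := sub_ne_zero.2 hs.symm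
  have hxc : (x : ℂ) ≠ 0 := ofReal_ne_zero.2 hx.ne'
  have hpow := hasDerivAt_ofReal_cpow_const hx.ne' hs'
  have hlog : HasDerivAt (fun y : ℝ => (Real.log y : ℂ)) ((x⁻¹ : ℝ) : ℂ) x :=
    (Real.hasDerivAt_log hx.ne').ofReal_comp
  refine (((hpow.mul hlog).div_const (1 - s)).sub (hpow.div_const ((1 - s) ^ 2))).congr_deriv ?_
  have hxs : (x : ℂ) ^ s ≠ 0 := cpow_ne_zero_iff.2 (Or.inl hxc)
  rw [show 1 - s - 1 = -s by ring, show 1 - s = 1 + -s by ring, cpow_add _ _ hxc, cpow_one,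
    cpow_neg]
  push_cast
  field_simp
  linear_combination (Real.log x : ℂ) * mul_inv_cancel₀ hs'

theorem integral_log_div_cpow {s : ℂ} (hs : s ≠ 1) {a b : ℝ} (ha : 0 < a) (hb : 0 < b) :
    ∫ x in a..b, (Real.log x : ℂ) / (x : ℂ) ^ s =
      logCpowPrimitive s b - logCpowPrimitive s a := by
  have hpos : ∀ x ∈ Set.uIcc a b, 0 < x := fun x hx => (lt_min ha hb).trans_le hx.1
  refine intervalIntegral.integral_eq_sub_of_hasDerivAt
    (fun x hx => hasDerivAt_logCpowPrimitive hs (hpos x hx)) (ContinuousOn.intervalIntegrable ?_)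
  refine ContinuousOn.div ?_ (fun x hx => ?_) (fun x hx => ?_)
  · exact continuous_ofReal.comp_continuousOn
      (Real.continuousOn_log.mono fun x hx => (hpos x hx).ne')
  · exact (continuousAt_ofReal_cpow_const x s (Or.inr (hpos x hx).ne')).continuousWithinAt
  · exact cpow_ne_zero_iff.2 (Or.inl (ofReal_ne_zero.2 (hpos x hx).ne'))

theorem norm_logCpowPrimitive_le {s : ℂ} {x c : ℝ} (hx : 0 < x) (hc : 0 < c)
    (hcs : c ≤ ‖1 - s‖) :
    ‖logCpowPrimitive s x‖ ≤ x ^ (1 - s.re) * (|Real.log x| / c + 1 / c ^ 2) := by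
  have hnorm : ‖(x : ℂ) ^ (1 - s)‖ = x ^ (1 - s.re) := by
    rw [norm_cpow_eq_rpow_re_of_pos hx, sub_re, one_re]
  calc ‖logCpowPrimitive s x‖
      ≤ ‖(x : ℂ) ^ (1 - s) * Real.log x / (1 - s)‖ + ‖(x : ℂ) ^ (1 - s) / (1 - s) ^ 2‖ :=
        norm_sub_le _ _
    _ = x ^ (1 - s.re) * (|Real.log x| / ‖1 - s‖ + 1 / ‖1 - s‖ ^ 2) := by
        rw [norm_div, norm_div, norm_mul, norm_pow, hnorm, norm_real, Real.norm_eq_abs]; ring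
    _ ≤ x ^ (1 - s.re) * (|Real.log x| / c + 1 / c ^ 2) := by gcongr

theorem one_div_add_log_div_sqrt_add_le {t : ℝ} (ht : Real.exp 2 ≤ t) :
    1 / t + Real.log t / √t + 1 / (t * √t) ≤ 0.921 := by
  set r := √t
  have hr : Real.exp 1 ≤ r := by
    rw [show Real.exp 2 = Real.exp 1 ^ 2 by rw [← Real.exp_nat_mul]; norm_num] at ht
    exact Real.le_sqrt_of_sq_le ht
  have hr0 : 0 < r := (Real.exp_pos 1).trans_le hr
  have ht_eq : t = r ^ 2 := (Real.sq_sqrt ((Real.exp_pos 2).le.trans ht)).symm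
  have hlog : Real.log r / r ≤ Real.exp (-1) := by
    simpa [Real.exp_neg] using
      Real.log_div_self_antitoneOn Set.self_mem_Ici hr hr
  have hinv : 1 / r ≤ Real.exp (-1) := by
    rw [Real.exp_neg, ← one_div]; exact one_div_le_one_div_of_le (Real.exp_pos 1) hr
  calc 1 / t + Real.log t / r + 1 / (t * r)
      = (1 / r) ^ 2 + 2 * (Real.log r / r) + (1 / r) ^ 3 := by
        rw [ht_eq, Real.log_pow]; field_simp; push_cast; ring
    _ ≤ Real.exp (-1) ^ 2 + 2 * Real.exp (-1) + Real.exp (-1) ^ 3 := by gcongr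
    _ ≤ 0.921 := by nlinarith [Real.exp_pos (-1), Real.exp_neg_one_lt_d9]

theorem stmt_15 (t : ℝ) (ht : Real.exp 2 ≤ t) :
    ‖(∫ x in t..(t ^ 2), (Real.log x : ℂ) / (x : ℂ) ^ ((1 / 2 : ℂ) + t * Complex.I))‖ ≤
      2 * Real.log t + 0.921 := by
  set s : ℂ := 1 / 2 + t * I
  have ht1 : 1 < t := (Real.one_lt_exp_iff.2 two_pos).trans_le ht
  have ht0 : 0 < t := one_pos.trans ht1
  have hlog : 0 ≤ Real.log t := Real.log_nonneg ht1.le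
  have hre : 1 - s.re = 1 / 2 := by norm_num [s]
  have him : (1 - s).im = -t := by simp [s]
  have hs : s ≠ 1 := fun h => by simp [h] at him; linarith
  have hts : t ≤ ‖1 - s‖ := by
    simpa [him, abs_of_pos ht0] using abs_im_le_norm (1 - s)
  have hsqrt : √t ^ 2 = t := Real.sq_sqrt ht0.le
  calc ‖∫ x in t..(t ^ 2), (Real.log x : ℂ) / (x : ℂ) ^ s‖
      = ‖logCpowPrimitive s (t ^ 2) - logCpowPrimitive s t‖ := by
        rw [integral_log_div_cpow hs ht0 (by positivity)]
    _ ≤ ‖logCpowPrimitive s (t ^ 2)‖ + ‖logCpowPrimitive s t‖ := norm_sub_le _ _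
    _ ≤ (t ^ 2) ^ (1 - s.re) * (|Real.log (t ^ 2)| / t + 1 / t ^ 2)
          + t ^ (1 - s.re) * (|Real.log t| / t + 1 / t ^ 2) :=
        add_le_add (norm_logCpowPrimitive_le (by positivity) ht0 hts)
          (norm_logCpowPrimitive_le ht0 ht0 hts)
    _ = 2 * Real.log t + (1 / t + Real.log t / √t + 1 / (t * √t)) := by
        rw [hre, ← Real.sqrt_eq_rpow, ← Real.sqrt_eq_rpow, Real.sqrt_sq ht0.le, Real.log_pow,
          abs_of_nonneg hlog, abs_of_nonneg (by positivity)]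
        field_simp
        push_cast
        linear_combination (t * Real.log t + 1) * hsqrt
    _ ≤ 2 * Real.log t + 0.921 := by gcongr; exact one_div_add_log_div_sqrt_add_le ht
end
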